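/- arXiv:2605.12183 — 3 statements merged into one kernel-verified Lean document; each statement's English description precedes it below -/
import Mathlib

section
/- Let k, k_U : ℝ^D × ℝ^D → ℝ be nonnegative kernels and y_1,...,y_N ∈ ℝ^D with ‖y_j‖ ≤ R. For a query x define the residual vector r(x) ∈ ℝ^N with entries r(x)_j = k(x,y_j) − k_U(x,y_j), and the exact normalizer d(x) = (1/N) Σ_j k(x,y_j). Define the exact attractive field V⁺(x) = μ(x) − x with μ(x) the k-weighted barycenter of the y_j at x, and the projected field V_U⁺(x) = μ_U(x) − x with μ_U(x) the k_U-weighted barycenter. Assume d(x) > 0 and ‖r(x)‖_2 ≤ √N · d(x) / 2. Then ‖V_U⁺(x) − V⁺(x)‖ ≤ (4R / (√N · d(x))) ‖r(x)‖_2. -/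
open BigOperators

/-- Local distortion of the projected attractive field: if the kernel residual
is small relative to the exact normalizer, then the projected attractive field
is close to the exact attractive field. -/
theorem projected_attractive_field_distortion
    {D N : ℕ} (k kU : EuclideanSpace ℝ (Fin D) → EuclideanSpace ℝ (Fin D) → ℝ)
    (hk : ∀ a b, 0 ≤ k a b) (hkU : ∀ a b, 0 ≤ kU a b)
    (y : Fin N → EuclideanSpace ℝ (Fin D)) (R : ℝ)
    (hy : ∀ j, ‖y j‖ ≤ R)
    (x : EuclideanSpace ℝ (Fin D))
    (r : Fin N → ℝ) (hr : ∀ j, r j = k x (y j) - kU x (y j))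
    (d : ℝ) (hd : d = (1 / (N : ℝ)) * ∑ j, k x (y j)) (hdpos : 0 < d)
    (hres : Real.sqrt (∑ j, r j ^ 2) ≤ Real.sqrt N * d / 2)
    (μ μU : EuclideanSpace ℝ (Fin D))
    (hμ : μ = (∑ j, k x (y j))⁻¹ • ∑ j, k x (y j) • y j)
    (hμU : μU = (∑ j, kU x (y j))⁻¹ • ∑ j, kU x (y j) • y j) :
    ‖(μU - x) - (μ - x)‖
      ≤ (4 * R / (Real.sqrt N * d)) * Real.sqrt (∑ j, r j ^ 2) := by
  set ρ := Real.sqrt (∑ j, r j ^ 2) with hρdef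
  have hρ0 : 0 ≤ ρ := Real.sqrt_nonneg _
  set S := ∑ j, k x (y j) with hSdef
  set SU := ∑ j, kU x (y j) with hSUdef
  have hS0 : 0 ≤ S := Finset.sum_nonneg fun j _ => hk x (y j)
  have hNne : (N : ℝ) ≠ 0 := by
    intro h
    rw [h] at hd
    simp at hd
    exact absurd hd (by linarith)
  have hNpos : 0 < (N : ℝ) := lt_of_le_of_ne (Nat.cast_nonneg N) (Ne.symm hNne)
  have hNe : N ≠ 0 := by exact_mod_cast hNne
  haveI : Nonempty (Fin N) := ⟨⟨0, Nat.pos_of_ne_zero hNe⟩⟩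
  have hR0 : 0 ≤ R := le_trans (norm_nonneg _) (hy (Classical.arbitrary _))
  have hS : S = N * d := by rw [hd]; field_simp
  have hSpos : 0 < S := by rw [hS]; positivity
  have hSne : S ≠ 0 := ne_of_gt hSpos
  have hsqrtN : Real.sqrt N * Real.sqrt N = (N : ℝ) := Real.mul_self_sqrt (Nat.cast_nonneg N)
  have hsqrtNpos : 0 < Real.sqrt N := Real.sqrt_pos.mpr hNpos
  have habs : ∑ j, |r j| ≤ Real.sqrt N * ρ := by
    have h1 := Finset.sum_mul_sq_le_sq_mul_sq Finset.univ (fun _ : Fin N => (1 : ℝ))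
      (fun j => |r j|)
    have h2 : (∑ j, |r j|) ^ 2 ≤ (N : ℝ) * ∑ j, r j ^ 2 := by
      simpa [sq_abs] using h1
    have h3 : (0 : ℝ) ≤ ∑ j, |r j| := Finset.sum_nonneg fun j _ => abs_nonneg _
    calc ∑ j, |r j| = Real.sqrt ((∑ j, |r j|) ^ 2) := (Real.sqrt_sq h3).symm
      _ ≤ Real.sqrt ((N : ℝ) * ∑ j, r j ^ 2) := Real.sqrt_le_sqrt h2
      _ = Real.sqrt N * ρ := by rw [Real.sqrt_mul (Nat.cast_nonneg N)]
  have hSsub : S - SU = ∑ j, r j := by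
    rw [hSdef, hSUdef, ← Finset.sum_sub_distrib]
    exact Finset.sum_congr rfl fun j _ => (hr j).symm
  have hdiff : |S - SU| ≤ Real.sqrt N * ρ := by
    rw [hSsub]
    exact (Finset.abs_sum_le_sum_abs _ _).trans habs
  have hρbig : Real.sqrt N * ρ ≤ (N : ℝ) * d / 2 := by
    calc Real.sqrt N * ρ ≤ Real.sqrt N * (Real.sqrt N * d / 2) :=
          mul_le_mul_of_nonneg_left hres (le_of_lt hsqrtNpos)
      _ = (N : ℝ) * d / 2 := by linear_combination (d / 2) * hsqrtN
  have hSU_lb : (N : ℝ) * d / 2 ≤ SU := by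
    have h2 := abs_le.mp hdiff
    nlinarith [h2.2]
  have hSUpos : 0 < SU := lt_of_lt_of_le (by positivity) hSU_lb
  have hSUne : SU ≠ 0 := ne_of_gt hSUpos
  have hμR : ‖μ‖ ≤ R := by
    rw [hμ, norm_smul]
    have hn : ‖∑ j, k x (y j) • y j‖ ≤ S * R := by
      calc ‖∑ j, k x (y j) • y j‖ ≤ ∑ j, ‖k x (y j) • y j‖ := norm_sum_le _ _
        _ = ∑ j, k x (y j) * ‖y j‖ := by
            refine Finset.sum_congr rfl fun j _ => ?_
            rw [norm_smul, Real.norm_eq_abs, abs_of_nonneg (hk x (y j))]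
        _ ≤ ∑ j, k x (y j) * R := Finset.sum_le_sum fun j _ =>
            mul_le_mul_of_nonneg_left (hy j) (hk x (y j))
        _ = S * R := by rw [hSdef, Finset.sum_mul]
    have hninv : ‖(S : ℝ)⁻¹‖ = S⁻¹ := by
      rw [Real.norm_eq_abs, abs_of_nonneg (inv_nonneg.mpr hS0)]
    rw [hninv]
    calc S⁻¹ * ‖∑ j, k x (y j) • y j‖ ≤ S⁻¹ * (S * R) :=
          mul_le_mul_of_nonneg_left hn (inv_nonneg.mpr hS0)
      _ = R := by field_simp
  have hnum : ‖(∑ j, kU x (y j) • y j) - ∑ j, k x (y j) • y j‖ ≤ R * (Real.sqrt N * ρ) := by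
    have heq : (∑ j, kU x (y j) • y j) - ∑ j, k x (y j) • y j = ∑ j, (-(r j)) • y j := by
      rw [← Finset.sum_sub_distrib]
      refine Finset.sum_congr rfl fun j _ => ?_
      rw [hr j, ← sub_smul]
      congr 1
      ring
    rw [heq]
    calc ‖∑ j, (-(r j)) • y j‖ ≤ ∑ j, ‖(-(r j)) • y j‖ := norm_sum_le _ _
      _ = ∑ j, |r j| * ‖y j‖ := by
          refine Finset.sum_congr rfl fun j _ => ?_
          rw [norm_smul, Real.norm_eq_abs, abs_neg]
      _ ≤ ∑ j, |r j| * R := Finset.sum_le_sum fun j _ =>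
          mul_le_mul_of_nonneg_left (hy j) (abs_nonneg _)
      _ = (∑ j, |r j|) * R := by rw [Finset.sum_mul]
      _ ≤ (Real.sqrt N * ρ) * R := mul_le_mul_of_nonneg_right habs hR0
      _ = R * (Real.sqrt N * ρ) := by ring
  have hn : S • μ = ∑ j, k x (y j) • y j := by
    rw [hμ, smul_smul, mul_inv_cancel₀ hSne, one_smul]
  have key : μU - μ
      = SU⁻¹ • (((∑ j, kU x (y j) • y j) - ∑ j, k x (y j) • y j) + (S - SU) • μ) := by
    have h1 : ((∑ j, kU x (y j) • y j) - ∑ j, k x (y j) • y j) + (S - SU) • μ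
        = (∑ j, kU x (y j) • y j) - SU • μ := by
      rw [sub_smul, hn]
      abel
    rw [h1, smul_sub, smul_smul, inv_mul_cancel₀ hSUne, one_smul, hμU]
  have hfin : ‖(μU - x) - (μ - x)‖ = ‖μU - μ‖ := by rw [sub_sub_sub_cancel_right]
  rw [hfin, key, norm_smul]
  have hSUinv : ‖(SU : ℝ)⁻¹‖ = SU⁻¹ := by
    rw [Real.norm_eq_abs, abs_of_nonneg (inv_nonneg.mpr (le_of_lt hSUpos))]
  rw [hSUinv]
  have hsumnorm : ‖((∑ j, kU x (y j) • y j) - ∑ j, k x (y j) • y j) + (S - SU) • μ‖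
      ≤ 2 * R * (Real.sqrt N * ρ) := by
    calc ‖((∑ j, kU x (y j) • y j) - ∑ j, k x (y j) • y j) + (S - SU) • μ‖
        ≤ ‖(∑ j, kU x (y j) • y j) - ∑ j, k x (y j) • y j‖ + ‖(S - SU) • μ‖ :=
          norm_add_le _ _
      _ ≤ R * (Real.sqrt N * ρ) + |S - SU| * ‖μ‖ := by
          rw [norm_smul, Real.norm_eq_abs]
          exact add_le_add hnum le_rfl
      _ ≤ R * (Real.sqrt N * ρ) + (Real.sqrt N * ρ) * R := by
          have : |S - SU| * ‖μ‖ ≤ (Real.sqrt N * ρ) * R :=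
            mul_le_mul hdiff hμR (norm_nonneg _) (by positivity)
          linarith
      _ = 2 * R * (Real.sqrt N * ρ) := by ring
  have hSUinvle : SU⁻¹ ≤ 2 / ((N : ℝ) * d) := by
    have h := one_div_le_one_div_of_le (show (0:ℝ) < (N : ℝ) * d / 2 by positivity) hSU_lb
    rwa [one_div_div, one_div] at h
  calc SU⁻¹ * ‖((∑ j, kU x (y j) • y j) - ∑ j, k x (y j) • y j) + (S - SU) • μ‖
      ≤ (2 / ((N : ℝ) * d)) * (2 * R * (Real.sqrt N * ρ)) := by
        apply mul_le_mul hSUinvle hsumnorm (norm_nonneg _) (by positivity)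
    _ = (4 * R / (Real.sqrt N * d)) * ρ := by
        rw [div_mul_eq_mul_div, div_mul_eq_mul_div,
          div_eq_div_iff (by positivity) (by positivity)]
        linear_combination 4 * R * ρ * d * hsqrtN
end

section
/- Under the hypotheses of the local field distortion theorem, the asymmetric field with projected attraction and exact repulsion evaluated when the model distribution equals the data distribution, V_{p,p}^U(x) = μ_U(x) − μ(x), satisfies ‖V_{p,p}^U(x)‖ ≤ (4R / (√N · d(x))) ‖r(x)‖_2. -/
/-!
Both barycenters are center masses of the same points `y j`, with weights `k` and `kU`.
Multiplying their difference by the total `kU`-mass gives `-∑ j, r j • (y j - μ)`, because the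
`k`-weighted deviations from `μ` sum to zero; each `y j - μ` has norm at most `2R`. Cauchy–Schwarz
bounds `∑ |r j|` by `√N ‖r‖₂ ≤ N d / 2`, so the `kU`-mass is at least half the `k`-mass `N d`.
-/

open Finset

namespace Finset

section Field

variable {R E ι : Type*} [Field R] [AddCommGroup E] [Module R E] (t : Finset ι) {w u : ι → R}
  {z : ι → E}

lemma sum_smul_sub_centerMass (hw : ∑ i ∈ t, w i ≠ 0) :
    ∑ i ∈ t, w i • (z i - t.centerMass w z) = 0 := by
  simp only [smul_sub, sum_sub_distrib, ← sum_smul, centerMass, smul_inv_smul₀ hw, sub_self]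

lemma sum_smul_centerMass_sub_centerMass (hu : ∑ i ∈ t, u i ≠ 0) (hw : ∑ i ∈ t, w i ≠ 0) :
    (∑ i ∈ t, u i) • (t.centerMass u z - t.centerMass w z) =
      -∑ i ∈ t, (w i - u i) • (z i - t.centerMass w z) := by
  simp_rw [sub_smul _ _ (_ - _), sum_sub_distrib, sum_smul_sub_centerMass t hw, zero_sub, neg_neg,
    smul_sub, sum_sub_distrib, ← sum_smul]
  rw [centerMass, smul_inv_smul₀ hu]

end Field

variable {E ι : Type*} [NormedAddCommGroup E] [NormedSpace ℝ E] {t : Finset ι} {w u : ι → ℝ}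
  {z : ι → E} {R : ℝ}

lemma norm_centerMass_le (hw : ∀ i ∈ t, 0 ≤ w i) (hw₀ : 0 < ∑ i ∈ t, w i)
    (hz : ∀ i ∈ t, ‖z i‖ ≤ R) : ‖t.centerMass w z‖ ≤ R :=
  mem_closedBall_zero_iff.1 <|
    (convex_closedBall 0 R).centerMass_mem hw hw₀ fun i hi ↦ mem_closedBall_zero_iff.2 (hz i hi)

lemma sum_mul_norm_centerMass_sub_centerMass_le (hw : ∀ i ∈ t, 0 ≤ w i)
    (hw₀ : 0 < ∑ i ∈ t, w i) (hu₀ : 0 < ∑ i ∈ t, u i) (hz : ∀ i ∈ t, ‖z i‖ ≤ R) :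
    (∑ i ∈ t, u i) * ‖t.centerMass u z - t.centerMass w z‖ ≤
      2 * R * ∑ i ∈ t, |w i - u i| := by
  have hμ := norm_centerMass_le hw hw₀ hz
  calc (∑ i ∈ t, u i) * ‖t.centerMass u z - t.centerMass w z‖
      = ‖∑ i ∈ t, (w i - u i) • (z i - t.centerMass w z)‖ := by
        rw [← abs_of_pos hu₀, ← Real.norm_eq_abs, ← norm_smul,
          sum_smul_centerMass_sub_centerMass t hu₀.ne' hw₀.ne', norm_neg]
    _ ≤ ∑ i ∈ t, |w i - u i| * (2 * R) := by
        refine norm_sum_le_of_le t fun i hi ↦ ?_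
        rw [norm_smul, Real.norm_eq_abs]
        gcongr
        linarith [norm_sub_le (z i) (t.centerMass w z), hz i hi]
    _ = 2 * R * ∑ i ∈ t, |w i - u i| := by rw [← sum_mul, mul_comm]

lemma norm_centerMass_sub_centerMass_le {δ : ℝ} (hw : ∀ i ∈ t, 0 ≤ w i)
    (hw₀ : 0 < ∑ i ∈ t, w i) (hz : ∀ i ∈ t, ‖z i‖ ≤ R)
    (hδ : ∑ i ∈ t, |w i - u i| ≤ δ) (hδw : 2 * δ ≤ ∑ i ∈ t, w i) :
    ‖t.centerMass u z - t.centerMass w z‖ ≤ 4 * R * δ / ∑ i ∈ t, w i := by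
  have hR : 0 ≤ R := (norm_nonneg _).trans (norm_centerMass_le hw hw₀ hz)
  have hu : (∑ i ∈ t, w i) / 2 ≤ ∑ i ∈ t, u i := by
    have : ∑ i ∈ t, (w i - u i) ≤ ∑ i ∈ t, |w i - u i| := sum_le_sum fun i _ ↦ le_abs_self _
    rw [sum_sub_distrib] at this
    linarith
  have hu₀ : 0 < ∑ i ∈ t, u i := by linarith
  have key : (∑ i ∈ t, u i) * ‖t.centerMass u z - t.centerMass w z‖ ≤ 2 * R * δ :=
    (sum_mul_norm_centerMass_sub_centerMass_le hw hw₀ hu₀ hz).trans (by gcongr)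
  rw [le_div_iff₀ hw₀]
  calc ‖t.centerMass u z - t.centerMass w z‖ * ∑ i ∈ t, w i
      ≤ 2 * ((∑ i ∈ t, u i) * ‖t.centerMass u z - t.centerMass w z‖) := by
        nlinarith [norm_nonneg (t.centerMass u z - t.centerMass w z)]
    _ ≤ 2 * (2 * R * δ) := by gcongr
    _ = 4 * R * δ := by ring

end Finset

lemma Real.sum_abs_le_sqrt_card_mul_sqrt_sum_sq {ι : Type*} (s : Finset ι) (f : ι → ℝ) :
    ∑ i ∈ s, |f i| ≤ √(#s : ℝ) * √(∑ i ∈ s, f i ^ 2) := by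
  simpa [mul_comm] using Real.sum_mul_le_sqrt_mul_sqrt s (fun i ↦ |f i|) 1

theorem driftxpress_equilibrium_residual_general
    {D N : ℕ} (k kU : EuclideanSpace ℝ (Fin D) → EuclideanSpace ℝ (Fin D) → ℝ)
    (hk : ∀ a b, 0 ≤ k a b)
    (y : Fin N → EuclideanSpace ℝ (Fin D)) (R : ℝ)
    (hy : ∀ j, ‖y j‖ ≤ R)
    (x : EuclideanSpace ℝ (Fin D))
    (r : Fin N → ℝ) (hr : ∀ j, r j = k x (y j) - kU x (y j))
    (d : ℝ) (hd : d = (1 / (N : ℝ)) * ∑ j, k x (y j)) (hdpos : 0 < d)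
    (hres : Real.sqrt (∑ j, r j ^ 2) ≤ Real.sqrt N * d / 2)
    (μ μU V : EuclideanSpace ℝ (Fin D))
    (hμ : μ = (∑ j, k x (y j))⁻¹ • ∑ j, k x (y j) • y j)
    (hμU : μU = (∑ j, kU x (y j))⁻¹ • ∑ j, kU x (y j) • y j)
    (hV : V = μU - μ) :
    ‖V‖ ≤ (4 * R / (Real.sqrt N * d)) * Real.sqrt (∑ j, r j ^ 2) := by
  have hN : (0 : ℝ) < N := by
    rcases N.eq_zero_or_pos with rfl | hN
    · simp [hd] at hdpos
    · exact_mod_cast hN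
  have hsqrtN : Real.sqrt N * Real.sqrt N = N := Real.mul_self_sqrt hN.le
  have hmass : ∑ j, k x (y j) = N * d := by rw [hd]; field_simp
  have hl1 : ∑ j, |k x (y j) - kU x (y j)| ≤ Real.sqrt N * Real.sqrt (∑ j, r j ^ 2) := by
    simpa [hr] using Real.sum_abs_le_sqrt_card_mul_sqrt_sum_sq univ r
  have hsmall : 2 * (Real.sqrt N * Real.sqrt (∑ j, r j ^ 2)) ≤ ∑ j, k x (y j) := by
    calc 2 * (Real.sqrt N * Real.sqrt (∑ j, r j ^ 2))
        ≤ 2 * (Real.sqrt N * (Real.sqrt N * d / 2)) := by gcongr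
      _ = ∑ j, k x (y j) := by rw [hmass]; linear_combination d * hsqrtN
  have hbound := norm_centerMass_sub_centerMass_le (fun j _ ↦ hk x (y j))
    (by rw [hmass]; positivity) (fun j _ ↦ hy j) hl1 hsmall
  rw [hV, hμ, hμU]
  refine hbound.trans_eq ?_
  rw [hmass]
  field_simp
  linear_combination R * Real.sqrt (∑ j, r j ^ 2) * hsqrtN

/-- Equilibrium residual of the asymmetric DriftXpress field: when the model
distribution equals the data distribution, `V_{p,p}^U(x) = μ_U(x) − μ(x)` is
controlled by the same local distortion bound. -/
theorem driftxpress_equilibrium_residual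
    {D N : ℕ} (k kU : EuclideanSpace ℝ (Fin D) → EuclideanSpace ℝ (Fin D) → ℝ)
    (hk : ∀ a b, 0 ≤ k a b) (hkU : ∀ a b, 0 ≤ kU a b)
    (y : Fin N → EuclideanSpace ℝ (Fin D)) (R : ℝ)
    (hy : ∀ j, ‖y j‖ ≤ R)
    (x : EuclideanSpace ℝ (Fin D))
    (r : Fin N → ℝ) (hr : ∀ j, r j = k x (y j) - kU x (y j))
    (d : ℝ) (hd : d = (1 / (N : ℝ)) * ∑ j, k x (y j)) (hdpos : 0 < d)
    (hres : Real.sqrt (∑ j, r j ^ 2) ≤ Real.sqrt N * d / 2)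
    (μ μU V : EuclideanSpace ℝ (Fin D))
    (hμ : μ = (∑ j, k x (y j))⁻¹ • ∑ j, k x (y j) • y j)
    (hμU : μU = (∑ j, kU x (y j))⁻¹ • ∑ j, kU x (y j) • y j)
    (hV : V = μU - μ) :
    ‖V‖ ≤ (4 * R / (Real.sqrt N * d)) * Real.sqrt (∑ j, r j ^ 2) :=
  driftxpress_equilibrium_residual_general k kU hk y R hy x r hr d hd hdpos hres μ μU V hμ hμU hV
end

section
/- Let k, k_U be nonnegative kernels on ℝ^D, and let y_1,...,y_N ∈ ℝ^D with ‖y_i‖ ≤ R. Let K and K_U be the N×N Gram matrices with entries K_{ij} = k(y_i,y_j) and (K_U)_{ij} = k_U(y_i,y_j). Let κ_min = min_i (1/N) Σ_j k(y_i, y_j), and assume κ_min > 0 and that every row of K − K_U has ℓ2 norm at most √N κ_min / 2. Then the average squared distortion of the projected attractive field on the support satisfies (1/N) Σ_{i=1}^N ‖V_U⁺(y_i) − V⁺(y_i)‖² ≤ (16 R² / (N² κ_min²)) ‖K − K_U‖_F², where V⁺ and V_U⁺ are the attractive fields defined via the k- and k_U-weighted barycenters of the y_j. -/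
/-!
At a support point `y i` the two fields differ by the difference of two barycenters of the
`y j`, with weights `a = K i ·` and `b = KU i ·`. Since `∑ a j • (y j - μ_a) = 0`, we get
`μ_b - μ_a = (∑ b)⁻¹ • ∑ (b j - a j) • (y j - μ_a)`, and `‖y j - μ_a‖ ≤ 2R` because `μ_a` lies
in the ball of radius `R`. Cauchy–Schwarz bounds `∑ |a j - b j|` by `√N ‖a - b‖₂ ≤ Nκ/2`, which
keeps `∑ b ≥ Nκ/2`; so `‖μ_b - μ_a‖ ≤ 4R ‖a - b‖₂ / (√N κ)`, and averaging the squares over `i`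
turns the squared row norms into `‖K - KU‖_F²`.
-/

open Finset

section CenterMass

variable {ι E : Type*} [NormedAddCommGroup E] [NormedSpace ℝ E]
  {s : Finset ι} {a b : ι → ℝ} {z : ι → E}

theorem Finset.centerMass_sub_centerMass (ha : ∑ i ∈ s, a i ≠ 0) (hb : ∑ i ∈ s, b i ≠ 0) :
    s.centerMass b z - s.centerMass a z =
      (∑ i ∈ s, b i)⁻¹ • ∑ i ∈ s, (b i - a i) • (z i - s.centerMass a z) := by
  have hac : ∑ i ∈ s, a i • z i = (∑ i ∈ s, a i) • s.centerMass a z := by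
    rw [centerMass, smul_smul, mul_inv_cancel₀ ha, one_smul]
  have hsum : ∑ i ∈ s, (b i - a i) • (z i - s.centerMass a z) =
      ∑ i ∈ s, b i • z i - (∑ i ∈ s, b i) • s.centerMass a z := by
    simp only [smul_sub, sub_smul, sum_sub_distrib, ← sum_smul, hac]
    abel
  rw [hsum, smul_sub, smul_smul, inv_mul_cancel₀ hb, one_smul]
  rfl

theorem Finset.norm_centerMass_sub_centerMass_le_s8 {R : ℝ} (ha₀ : ∀ i ∈ s, 0 ≤ a i)
    (ha : 0 < ∑ i ∈ s, a i) (hb : 0 < ∑ i ∈ s, b i) (hz : ∀ i ∈ s, ‖z i‖ ≤ R) :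
    ‖s.centerMass b z - s.centerMass a z‖ ≤ 2 * R / (∑ i ∈ s, b i) * ∑ i ∈ s, |b i - a i| := by
  have hc : ‖s.centerMass a z‖ ≤ R := by
    simpa using (convex_closedBall (0 : E) R).centerMass_mem ha₀ ha (by simpa using hz)
  rw [centerMass_sub_centerMass ha.ne' hb.ne', norm_smul, Real.norm_of_nonneg (by positivity),
    div_mul_eq_mul_div, div_eq_inv_mul]
  gcongr
  calc ‖∑ i ∈ s, (b i - a i) • (z i - s.centerMass a z)‖
      ≤ ∑ i ∈ s, ‖(b i - a i) • (z i - s.centerMass a z)‖ := norm_sum_le _ _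
    _ ≤ ∑ i ∈ s, 2 * R * |b i - a i| := by
        gcongr with i hi
        rw [norm_smul, Real.norm_eq_abs, mul_comm]
        gcongr
        linarith [norm_sub_le (z i) (s.centerMass a z), hz i hi]
    _ = 2 * R * ∑ i ∈ s, |b i - a i| := (mul_sum _ _ _).symm

theorem sq_norm_centerMass_sub_centerMass_le [Fintype ι] [Nonempty ι] {R κ : ℝ}
    (ha₀ : ∀ i, 0 ≤ a i) (hκ : 0 < κ) (ha : Fintype.card ι * κ ≤ ∑ i, a i)
    (hab : √(∑ i, (a i - b i) ^ 2) ≤ √(Fintype.card ι) * κ / 2) (hz : ∀ i, ‖z i‖ ≤ R) :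
    ‖univ.centerMass b z - univ.centerMass a z‖ ^ 2 ≤
      16 * R ^ 2 / (Fintype.card ι * κ ^ 2) * ∑ i, (a i - b i) ^ 2 := by
  set n : ℝ := (Fintype.card ι : ℝ)
  set S := ∑ i, (a i - b i) ^ 2
  set T := ∑ i, |a i - b i|
  have hn : 0 < n := Nat.cast_pos.mpr Fintype.card_pos
  have hS : S ≤ n * κ ^ 2 / 4 := by
    have := pow_le_pow_left₀ (Real.sqrt_nonneg _) hab 2
    rw [Real.sq_sqrt (by positivity), div_pow, mul_pow, Real.sq_sqrt hn.le] at this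
    linarith
  have hTS : T ^ 2 ≤ n * S := by
    simpa only [sq_abs, card_univ] using
      sq_sum_le_card_mul_sum_sq (s := univ) (f := fun i => |a i - b i|)
  have hT : T ≤ n * κ / 2 := by
    have hT₀ : 0 ≤ T := sum_nonneg fun i _ => abs_nonneg _
    refine (pow_le_pow_iff_left₀ hT₀ (by positivity) two_ne_zero).mp ?_
    calc T ^ 2 ≤ n * S := hTS
      _ ≤ n * (n * κ ^ 2 / 4) := by gcongr
      _ = (n * κ / 2) ^ 2 := by ring
  have hb : n * κ / 2 ≤ ∑ i, b i := by
    have : ∑ i, a i - ∑ i, b i ≤ T := by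
      rw [← sum_sub_distrib]
      exact (le_abs_self _).trans (abs_sum_le_sum_abs _ _)
    linarith
  have hb₀ : 0 < ∑ i, b i := lt_of_lt_of_le (by positivity) hb
  have hdist := norm_centerMass_sub_centerMass_le_s8 (fun i _ => ha₀ i)
    ((by positivity : 0 < n * κ).trans_le ha) hb₀ (fun i _ => hz i)
  simp only [abs_sub_comm (b _)] at hdist
  calc ‖univ.centerMass b z - univ.centerMass a z‖ ^ 2
      ≤ (2 * R / (∑ i, b i) * T) ^ 2 := pow_le_pow_left₀ (norm_nonneg _) hdist 2
    _ = 4 * R ^ 2 * T ^ 2 / (∑ i, b i) ^ 2 := by ring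
    _ ≤ 4 * R ^ 2 * (n * S) / (n * κ / 2) ^ 2 := by gcongr
    _ = 16 * R ^ 2 / (n * κ ^ 2) * S := by field_simp; ring

end CenterMass

theorem on_support_field_distortion_general
    {D N : ℕ} (k kU : EuclideanSpace ℝ (Fin D) → EuclideanSpace ℝ (Fin D) → ℝ)
    (hk : ∀ a b, 0 ≤ k a b)
    (y : Fin N → EuclideanSpace ℝ (Fin D)) (R : ℝ)
    (hy : ∀ i, ‖y i‖ ≤ R)
    (K KU : Matrix (Fin N) (Fin N) ℝ)
    (hK : ∀ i j, K i j = k (y i) (y j))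
    (hKU : ∀ i j, KU i j = kU (y i) (y j))
    (κmin : ℝ)
    (hκ : ∀ i, κmin ≤ (1 / (N : ℝ)) * ∑ j, k (y i) (y j))
    (hκpos : 0 < κmin)
    (hrow : ∀ i, Real.sqrt (∑ j, (K i j - KU i j) ^ 2)
              ≤ Real.sqrt N * κmin / 2)
    (Vplus VUplus : EuclideanSpace ℝ (Fin D) → EuclideanSpace ℝ (Fin D))
    (hV : ∀ x, Vplus x = (∑ j, k x (y j))⁻¹ • (∑ j, k x (y j) • y j) - x)
    (hVU : ∀ x, VUplus x = (∑ j, kU x (y j))⁻¹ • (∑ j, kU x (y j) • y j) - x) :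
    (1 / (N : ℝ)) * ∑ i, ‖VUplus (y i) - Vplus (y i)‖ ^ 2
      ≤ (16 * R ^ 2 / ((N : ℝ) ^ 2 * κmin ^ 2)) *
          (∑ i, ∑ j, (K i j - KU i j) ^ 2) := by
  rcases isEmpty_or_nonempty (Fin N) with hN | hN
  · simp
  have hNpos : (0 : ℝ) < N := Nat.cast_pos.mpr (Fin.pos_iff_nonempty.mpr hN)
  have hpoint : ∀ i, ‖VUplus (y i) - Vplus (y i)‖ ^ 2 ≤
      16 * R ^ 2 / (N * κmin ^ 2) * ∑ j, (K i j - KU i j) ^ 2 := by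
    intro i
    have hmass : N * κmin ≤ ∑ j, k (y i) (y j) := by
      have := hκ i
      rwa [one_div_mul_eq_div, le_div_iff₀' hNpos] at this
    have hrow_i := hrow i
    simp only [hK, hKU] at hrow_i ⊢
    rw [hV, hVU, sub_sub_sub_cancel_right]
    have h := sq_norm_centerMass_sub_centerMass_le (z := y) (fun j => hk (y i) (y j)) hκpos
      (by rwa [Fintype.card_fin]) (by rwa [Fintype.card_fin]) hy
    rwa [Fintype.card_fin] at h
  calc (1 / (N : ℝ)) * ∑ i, ‖VUplus (y i) - Vplus (y i)‖ ^ 2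
      ≤ (1 / N) * ∑ i, 16 * R ^ 2 / (N * κmin ^ 2) * ∑ j, (K i j - KU i j) ^ 2 := by
        gcongr with i; exact hpoint i
    _ = (16 * R ^ 2 / ((N : ℝ) ^ 2 * κmin ^ 2)) * (∑ i, ∑ j, (K i j - KU i j) ^ 2) := by
        rw [← mul_sum]; field_simp

/-- On-support distortion of the projected attractive field: the average
squared field distortion over the support is controlled by the Frobenius norm
of the Gram approximation error. -/
theorem on_support_field_distortion
    {D N : ℕ} (k kU : EuclideanSpace ℝ (Fin D) → EuclideanSpace ℝ (Fin D) → ℝ)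
    (hk : ∀ a b, 0 ≤ k a b) (hkU : ∀ a b, 0 ≤ kU a b)
    (y : Fin N → EuclideanSpace ℝ (Fin D)) (R : ℝ)
    (hy : ∀ i, ‖y i‖ ≤ R)
    (K KU : Matrix (Fin N) (Fin N) ℝ)
    (hK : ∀ i j, K i j = k (y i) (y j))
    (hKU : ∀ i j, KU i j = kU (y i) (y j))
    (κmin : ℝ)
    (hκ : ∀ i, κmin ≤ (1 / (N : ℝ)) * ∑ j, k (y i) (y j))
    (hκpos : 0 < κmin)
    (hrow : ∀ i, Real.sqrt (∑ j, (K i j - KU i j) ^ 2)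
              ≤ Real.sqrt N * κmin / 2)
    (Vplus VUplus : EuclideanSpace ℝ (Fin D) → EuclideanSpace ℝ (Fin D))
    (hV : ∀ x, Vplus x = (∑ j, k x (y j))⁻¹ • (∑ j, k x (y j) • y j) - x)
    (hVU : ∀ x, VUplus x = (∑ j, kU x (y j))⁻¹ • (∑ j, kU x (y j) • y j) - x) :
    (1 / (N : ℝ)) * ∑ i, ‖VUplus (y i) - Vplus (y i)‖ ^ 2
      ≤ (16 * R ^ 2 / ((N : ℝ) ^ 2 * κmin ^ 2)) *
          (∑ i, ∑ j, (K i j - KU i j) ^ 2) :=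
  on_support_field_distortion_general k kU hk y R hy K KU hK hKU κmin hκ hκpos hrow Vplus VUplus hV
    hVU
end
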